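/- Let k ≥ 1 be an integer and D = (1/k)·H₀ − (1/(k+1))·H₁ ∈ ℚ ⊗ Div(ℙ²) with H₀ = V(x₀), H₁ = V(x₁). Then the generalized canonical ring R_D = ⊕_{d≥0} u^d H⁰(ℙ², ⌊dD⌋) has a minimal generator in degree k(k+1); in particular the degree of generation of R_D is at least k(k+1). -/

import Mathlib

open MvPolynomial Polynomial

/-- The monomial u^d x₀^{e₀} x₁^{e₁} x₂^{e₂}, as an element of K[u] for
K the function field of ℙ². -/
noncomputable def s6Mon (k : Type*) [Field k] (d : ℕ) (e : Fin 3 → ℤ) :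
    Polynomial (FractionRing (MvPolynomial (Fin 3) k)) :=
  Polynomial.C (∏ i, (algebraMap (MvPolynomial (Fin 3) k)
      (FractionRing (MvPolynomial (Fin 3) k)) (MvPolynomial.X i)) ^ (e i)) *
    Polynomial.X ^ d

/-- Monomial basis of u^d H⁰(ℙ², ⌊dD⌋) for D = (1/κ)V(x₀) − (1/(κ+1))V(x₁). -/
def s6Set (k : Type*) [Field k] (κ : ℕ) (d : ℕ) :
    Set (Polynomial (FractionRing (MvPolynomial (Fin 3) k))) :=
  {p | ∃ e : Fin 3 → ℤ, e 0 + e 1 + e 2 = 0 ∧ -(κ : ℤ) * e 0 ≤ (d : ℤ) ∧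
    (d : ℤ) ≤ ((κ : ℤ) + 1) * e 1 ∧ 0 ≤ e 2 ∧ p = s6Mon k d e}

/-!
The substitution x₂ ↦ x₂ + x₀ induces a `k`-algebra endomorphism of the function field `K` of
ℙ², hence of `K[u]`. It fixes x₀ and x₁, so it fixes every monomial of degree `d < κ(κ+1)`:
there the bounds force the exponent of x₂ to vanish. Hence it fixes the whole subalgebra these
monomials generate, but it moves u^{κ(κ+1)} x₀^{-κ-1} x₁^κ x₂.
-/

theorem exponent_two_eq_zero_of_lt {κ d : ℕ} {e : Fin 3 → ℤ} (hsum : e 0 + e 1 + e 2 = 0)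
    (h₀ : -(κ : ℤ) * e 0 ≤ d) (h₁ : (d : ℤ) ≤ ((κ : ℤ) + 1) * e 1) (h₂ : 0 ≤ e 2)
    (hd : d < κ * (κ + 1)) : e 2 = 0 := by
  have hd' : (d : ℤ) < κ * (κ + 1) := by exact_mod_cast hd
  by_contra hne
  have hκ : (0 : ℤ) ≤ κ := by positivity
  have he₀ : e 0 ≤ -1 - e 1 := by omega
  have hκe₁ : (κ : ℤ) * (1 + e 1) ≤ d := by nlinarith
  have he₁ : (κ : ℤ) ≤ e 1 := by nlinarith
  nlinarith

section Coordinates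

variable (k : Type*) [Field k]

noncomputable def coord (i : Fin 3) :
    FractionRing (MvPolynomial (Fin 3) k) :=
  algebraMap (MvPolynomial (Fin 3) k) _ (MvPolynomial.X i)

theorem coord_ne_zero (i : Fin 3) : coord k i ≠ 0 :=
  (map_ne_zero_iff _ (IsFractionRing.injective _ _)).2 (X_ne_zero i)

theorem s6Mon_eq_C_mul_X_pow (d : ℕ) (e : Fin 3 → ℤ) :
    s6Mon k d e = Polynomial.C (∏ i, coord k i ^ e i) * Polynomial.X ^ d :=
  rfl

end Coordinates

namespace ShiftX₂

variable (k : Type*) [Field k]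

noncomputable def poly : MvPolynomial (Fin 3) k →ₐ[k] MvPolynomial (Fin 3) k :=
  aeval ![MvPolynomial.X 0, MvPolynomial.X 1, MvPolynomial.X 2 + MvPolynomial.X 0]

theorem poly_injective : Function.Injective (poly k) := by
  let inv : MvPolynomial (Fin 3) k →ₐ[k] MvPolynomial (Fin 3) k :=
    aeval ![MvPolynomial.X 0, MvPolynomial.X 1, MvPolynomial.X 2 - MvPolynomial.X 0]
  have h : inv.comp (poly k) = AlgHom.id k _ := by
    ext i
    fin_cases i <;> simp [inv, poly]
  exact Function.LeftInverse.injective (g := inv) (DFunLike.congr_fun h)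

theorem toAlgHom_comp_poly_injective :
    Function.Injective ((IsScalarTower.toAlgHom k (MvPolynomial (Fin 3) k)
      (FractionRing (MvPolynomial (Fin 3) k))).comp (poly k)) :=
  (IsFractionRing.injective (MvPolynomial (Fin 3) k) _).comp (poly_injective k)

noncomputable def field :
    FractionRing (MvPolynomial (Fin 3) k) →ₐ[k] FractionRing (MvPolynomial (Fin 3) k) :=
  IsFractionRing.liftAlgHom (toAlgHom_comp_poly_injective k)

theorem field_coord (i : Fin 3) :
    field k (coord k i) = algebraMap _ _ (poly k (MvPolynomial.X i)) := by
  rw [field, coord, IsFractionRing.liftAlgHom_apply, IsFractionRing.lift_algebraMap]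
  rfl

theorem field_coord_zero : field k (coord k 0) = coord k 0 := by
  rw [field_coord]
  simp [poly, coord]

theorem field_coord_one : field k (coord k 1) = coord k 1 := by
  rw [field_coord]
  simp [poly, coord]

theorem field_coord_two : field k (coord k 2) = coord k 2 + coord k 0 := by
  rw [field_coord]
  simp [poly, coord]

variable {k}

theorem field_prod_coord_zpow_of_exponent_two_eq_zero {e : Fin 3 → ℤ} (he : e 2 = 0) :
    field k (∏ i, coord k i ^ e i) = ∏ i, coord k i ^ e i := by
  simp only [Fin.prod_univ_three, map_mul, map_zpow₀, field_coord_zero, field_coord_one, he,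
    zpow_zero, map_one]

theorem field_prod_coord_zpow_ne_of_exponent_two_eq_one {e : Fin 3 → ℤ} (he : e 2 = 1) :
    field k (∏ i, coord k i ^ e i) ≠ ∏ i, coord k i ^ e i := by
  rw [Fin.prod_univ_three, map_mul, map_mul, map_zpow₀, map_zpow₀,
    map_zpow₀, field_coord_zero, field_coord_one, field_coord_two, he, zpow_one, zpow_one, Ne,
    mul_right_inj' (mul_ne_zero (zpow_ne_zero _ (coord_ne_zero k 0))
      (zpow_ne_zero _ (coord_ne_zero k 1))), add_eq_left]
  exact coord_ne_zero k 0

noncomputable def polynomial :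
    Polynomial (FractionRing (MvPolynomial (Fin 3) k)) →ₐ[k]
      Polynomial (FractionRing (MvPolynomial (Fin 3) k)) :=
  mapAlgHom (field k)

theorem polynomial_s6Mon_eq_self_iff {d : ℕ} {e : Fin 3 → ℤ} :
    polynomial (s6Mon k d e) = s6Mon k d e ↔
      field k (∏ i, coord k i ^ e i) = ∏ i, coord k i ^ e i := by
  rw [polynomial, s6Mon_eq_C_mul_X_pow, coe_mapAlgHom, Polynomial.map_mul, Polynomial.map_pow,
    Polynomial.map_C, Polynomial.map_X, Polynomial.C_mul_X_pow_eq_monomial,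
    Polynomial.C_mul_X_pow_eq_monomial]
  exact (monomial_injective d).eq_iff

end ShiftX₂

theorem adjoin_s6Set_lt_le_equalizer_shiftX₂ (k : Type*) [Field k] (κ : ℕ) :
    Algebra.adjoin k {x | ∃ d : ℕ, 0 < d ∧ d < κ * (κ + 1) ∧ x ∈ s6Set k κ d} ≤
      AlgHom.equalizer ShiftX₂.polynomial (AlgHom.id k _) := by
  refine Algebra.adjoin_le ?_
  rintro _ ⟨d, -, hd, e, hsum, h₀, h₁, h₂, rfl⟩
  exact ShiftX₂.polynomial_s6Mon_eq_self_iff.2 <|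
    ShiftX₂.field_prod_coord_zpow_of_exponent_two_eq_zero <|
      exponent_two_eq_zero_of_lt hsum h₀ h₁ h₂ hd

theorem stmt6_general (k : Type*) [Field k] (κ : ℕ) :
    ∃ p, p ∈ s6Set k κ (κ * (κ + 1)) ∧
      p ∉ Algebra.adjoin k {x | ∃ d : ℕ, 0 < d ∧ d < κ * (κ + 1) ∧ x ∈ s6Set k κ d} := by
  let e : Fin 3 → ℤ := ![-κ - 1, κ, 1]
  refine ⟨s6Mon k (κ * (κ + 1)) e, ⟨e, ?_, ?_, ?_, ?_, rfl⟩, fun hmem => ?_⟩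
  · simp [e]
    ring
  · simp only [e]
    push_cast
    linarith
  · simp only [e]
    push_cast
    linarith
  · simp [e]
  · exact ShiftX₂.field_prod_coord_zpow_ne_of_exponent_two_eq_one rfl <|
      ShiftX₂.polynomial_s6Mon_eq_self_iff.1 (adjoin_s6Set_lt_le_equalizer_shiftX₂ k κ hmem)

/-- for D = (1/k)H₀ − (1/(k+1))H₁ on ℙ², the ring R_D has a minimal generator
in degree k(k+1). -/
theorem stmt6 (k : Type*) [Field k] [IsAlgClosed k] (κ : ℕ) (hκ : 1 ≤ κ) :
    ∃ p, p ∈ s6Set k κ (κ * (κ + 1)) ∧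
      p ∉ Algebra.adjoin k {x | ∃ d : ℕ, 0 < d ∧ d < κ * (κ + 1) ∧ x ∈ s6Set k κ d} :=
  stmt6_general k κ
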